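/- arXiv:2407.09947 — 2 statements merged into one kernel-verified Lean document; each statement's English description precedes it below -/
import Mathlib

section
/- Let B be a Banach algebra whose canonical image is a left ideal in (B**,□), and let X be a right Banach B-module such that for every φ ∈ B the map f ↦ φ·f : X* → X* is weak*-to-weak continuous, where ⟨φ·f, x⟩ = ⟨f, xφ⟩ (f∈X*, x∈X). Then the canonical image of B_X is a left ideal in (B_X)** with its first Arens product. -/
noncomputable section

open NormedSpace Filter Topology

namespace ArensNote

variable {X A : Type*} [NormedAddCommGroup X] [NormedSpace ℂ X]
  [NormedAddCommGroup A] [NormedSpace ℂ A]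

/-- The bidual of a normed space. -/
abbrev Bidual (E : Type*) [NormedAddCommGroup E] [NormedSpace ℂ E] :=
  StrongDual ℂ (StrongDual ℂ E)

/-- The canonical embedding of a normed space into its bidual. -/
abbrev iota (E : Type*) [NormedAddCommGroup E] [NormedSpace ℂ E] :
    E →L[ℂ] Bidual E :=
  inclusionInDoubleDual ℂ E

section action

variable (sm : X →L[ℂ] A →L[ℂ] X)

/-- First adjoint of a (right) module action `sm` of `A` on `X`:
`⟨fodot sm f x, φ⟩ = ⟨f, x·φ⟩`. -/
def fodot (f : StrongDual ℂ X) (x : X) : StrongDual ℂ A :=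
  f.comp (sm x)

@[simp] lemma fodot_apply (f : StrongDual ℂ X) (x : X) (φ : A) :
    fodot sm f x φ = f (sm x φ) := rfl

lemma fodot_add (f g : StrongDual ℂ X) (x : X) :
    fodot sm (f + g) x = fodot sm f x + fodot sm g x := by
  ext φ; simp

lemma fodot_smul (c : ℂ) (f : StrongDual ℂ X) (x : X) :
    fodot sm (c • f) x = c • fodot sm f x := by
  ext φ; simp

lemma fodot_norm_le (f : StrongDual ℂ X) (x : X) :
    ‖fodot sm f x‖ ≤ ‖f‖ * (‖sm‖ * ‖x‖) :=
  le_trans (ContinuousLinearMap.opNorm_comp_le f (sm x))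
    (mul_le_mul_of_nonneg_left (sm.le_opNorm x) (norm_nonneg f))

/-- Second adjoint of the module action: `⟨mdot sm m f, x⟩ = ⟨m, f ⊙ x⟩`. -/
def mdot (m : Bidual A) (f : StrongDual ℂ X) : StrongDual ℂ X :=
  LinearMap.mkContinuous
    { toFun := fun x => m (fodot sm f x)
      map_add' := by
        intro x y
        have h : fodot sm f (x + y) = fodot sm f x + fodot sm f y := by
          ext φ; simp
        show m (fodot sm f (x + y)) = m (fodot sm f x) + m (fodot sm f y)
        rw [h, map_add]
      map_smul' := by
        intro c x
        have h : fodot sm f (c • x) = c • fodot sm f x := by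
          ext φ; simp
        show m (fodot sm f (c • x)) = (RingHom.id ℂ) c • m (fodot sm f x)
        rw [h, map_smul, RingHom.id_apply] }
    (‖m‖ * ‖f‖ * ‖sm‖)
    (fun x => by
      calc ‖m (fodot sm f x)‖ ≤ ‖m‖ * ‖fodot sm f x‖ := m.le_opNorm _
        _ ≤ ‖m‖ * (‖f‖ * (‖sm‖ * ‖x‖)) :=
            mul_le_mul_of_nonneg_left (fodot_norm_le sm f x) (norm_nonneg m)
        _ = ‖m‖ * ‖f‖ * ‖sm‖ * ‖x‖ := by ring)

@[simp] lemma mdot_apply (m : Bidual A) (f : StrongDual ℂ X) (x : X) :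
    mdot sm m f x = m (fodot sm f x) := rfl

lemma mdot_add (m : Bidual A) (f g : StrongDual ℂ X) :
    mdot sm m (f + g) = mdot sm m f + mdot sm m g := by
  ext x; simp [fodot_add, map_add]

lemma mdot_smul (m : Bidual A) (c : ℂ) (f : StrongDual ℂ X) :
    mdot sm m (c • f) = c • mdot sm m f := by
  ext x; simp [fodot_smul, map_smul]

lemma mdot_norm_le (m : Bidual A) (f : StrongDual ℂ X) :
    ‖mdot sm m f‖ ≤ ‖m‖ * ‖f‖ * ‖sm‖ :=
  LinearMap.mkContinuous_norm_le _ (by positivity) _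

/-- The bidual module action : `⟨modAct sm p m, f⟩ = ⟨p, m · f⟩`. -/
def modAct (p : Bidual X) (m : Bidual A) : Bidual X :=
  LinearMap.mkContinuous
    { toFun := fun f => p (mdot sm m f)
      map_add' := by
        intro f g
        show p (mdot sm m (f + g)) = p (mdot sm m f) + p (mdot sm m g)
        rw [mdot_add, map_add]
      map_smul' := by
        intro c f
        show p (mdot sm m (c • f)) = (RingHom.id ℂ) c • p (mdot sm m f)
        rw [mdot_smul, map_smul, RingHom.id_apply] }
    (‖p‖ * ‖m‖ * ‖sm‖)
    (fun f => by
      calc ‖p (mdot sm m f)‖ ≤ ‖p‖ * ‖mdot sm m f‖ := p.le_opNorm _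
        _ ≤ ‖p‖ * (‖m‖ * ‖f‖ * ‖sm‖) :=
            mul_le_mul_of_nonneg_left (mdot_norm_le sm m f) (norm_nonneg p)
        _ = ‖p‖ * ‖m‖ * ‖sm‖ * ‖f‖ := by ring)

@[simp] lemma modAct_apply (p : Bidual X) (m : Bidual A) (f : StrongDual ℂ X) :
    modAct sm p m f = p (mdot sm m f) := rfl

end action

section algebra

variable (mA : A →L[ℂ] A →L[ℂ] A)

/-- The first Arens product on the bidual:
`⟨m □ n, f⟩ = ⟨m, n·f⟩`, `⟨n·f, φ⟩ = ⟨n, f·φ⟩`, `⟨f·φ, ψ⟩ = ⟨f, φψ⟩`. -/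
def arens1 (m n : Bidual A) : Bidual A := modAct mA m n

/-- The second Arens product on the bidual:
`⟨m ◇ n, f⟩ = ⟨n, f·m⟩`, `⟨f·m, φ⟩ = ⟨m, φ·f⟩`, `⟨φ·f, ψ⟩ = ⟨f, ψφ⟩`. -/
def arens2 (m n : Bidual A) : Bidual A := modAct mA.flip n m

/-- A Banach algebra is Arens regular when the two Arens products coincide. -/
def ArensRegular : Prop :=
  ∀ m n : Bidual A, arens1 mA m n = arens2 mA m n

/-- The weakly almost periodic functionals on `A`. -/
def WAP : Set (StrongDual ℂ A) :=
  {f | ∀ m n : Bidual A, arens1 mA m n f = arens2 mA m n f}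

/-- `e` is a mixed identity: a right identity for the first Arens product and a
left identity for the second Arens product. -/
def IsMixedIdentity (e : Bidual A) : Prop :=
  (∀ m : Bidual A, arens1 mA m e = m) ∧ ∀ m : Bidual A, arens2 mA e m = m

/-- `mA` makes `A` into a (non-unital) Banach algebra. -/
structure IsBanachAlgebra : Prop where
  mul_assoc : ∀ a b c : A, mA (mA a b) c = mA a (mA b c)
  norm_mul_le : ∀ a b : A, ‖mA a b‖ ≤ ‖a‖ * ‖b‖

/-- `J` is a two-sided ideal for the multiplication `mA`. -/
def IsTwoSidedIdeal (J : Set A) : Prop :=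
  ∀ a b : A, a ∈ J → mA a b ∈ J ∧ mA b a ∈ J

/-- `A` has a contractive (two-sided) approximate identity. -/
def HasCAI : Prop :=
  ∃ l : Filter A, l.NeBot ∧ (∀ᶠ x in l, ‖x‖ ≤ 1) ∧
    (∀ a : A, Tendsto (fun x => mA x a) l (𝓝 a)) ∧
    ∀ a : A, Tendsto (fun x => mA a x) l (𝓝 a)

/-- `A` has a bounded (two-sided) approximate identity. -/
def HasBAI : Prop :=
  ∃ l : Filter A, l.NeBot ∧ (∃ C : ℝ, ∀ᶠ x in l, ‖x‖ ≤ C) ∧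
    (∀ a : A, Tendsto (fun x => mA x a) l (𝓝 a)) ∧
    ∀ a : A, Tendsto (fun x => mA a x) l (𝓝 a)

/-- `A` has a bounded right approximate identity. -/
def HasBRAI : Prop :=
  ∃ l : Filter A, l.NeBot ∧ (∃ C : ℝ, ∀ᶠ x in l, ‖x‖ ≤ C) ∧
    ∀ a : A, Tendsto (fun x => mA a x) l (𝓝 a)

/-- `A` has a bounded left approximate identity. -/
def HasBLAI : Prop :=
  ∃ l : Filter A, l.NeBot ∧ (∃ C : ℝ, ∀ᶠ x in l, ‖x‖ ≤ C) ∧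
    ∀ a : A, Tendsto (fun x => mA x a) l (𝓝 a)

end algebra

/-- The annihilator `S^⊥ ⊆ A*` of a subset `S ⊆ A`. -/
def perp (S : Set A) : Set (StrongDual ℂ A) := {f | ∀ a ∈ S, f a = 0}

/-- The annihilator in the bidual of a set of functionals. -/
def perp' (S : Set (StrongDual ℂ A)) : Set (Bidual A) := {m | ∀ f ∈ S, m f = 0}

/-- `A` is weakly sequentially complete. -/
def WeaklySequentiallyComplete (E : Type*) [NormedAddCommGroup E] [NormedSpace ℂ E] : Prop :=
  ∀ x : ℕ → E,
    (∀ f : StrongDual ℂ E, ∃ c : ℂ, Tendsto (fun n => f (x n)) atTop (𝓝 c)) →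
    ∃ a : E, ∀ f : StrongDual ℂ E, Tendsto (fun n => f (x n)) atTop (𝓝 (f a))

/-- The restriction map `A* → J*`, adjoint of the inclusion `J → A`. -/
def restrictDual (J : Submodule ℂ A) : StrongDual ℂ A →L[ℂ] StrongDual ℂ ↥J :=
  (ContinuousLinearMap.compL ℂ ↥J A ℂ).flip J.subtypeL

@[simp] lemma restrictDual_apply (J : Submodule ℂ A) (f : StrongDual ℂ A) (x : ↥J) :
    restrictDual J f x = f x := rfl

/-- The second adjoint `J** → A**` of the inclusion of a closed subspace `J` into `A`. -/
def bidualTrans (J : Submodule ℂ A) (m : Bidual ↥J) : Bidual A :=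
  m.comp (restrictDual J)

@[simp] lemma bidualTrans_apply (J : Submodule ℂ A) (m : Bidual ↥J) (f : StrongDual ℂ A) :
    bidualTrans J m f = m (restrictDual J f) := rfl

/-- The subspace `X × {0}` of the `ℓ¹`-direct sum `X ⊕₁ B`. -/
def sndZero (X B : Type*) [NormedAddCommGroup X] [NormedSpace ℂ X]
    [NormedAddCommGroup B] [NormedSpace ℂ B] : Submodule ℂ (WithLp 1 (X × B)) :=
  (Submodule.prod (⊤ : Submodule ℂ X) (⊥ : Submodule ℂ B)).comap
    (WithLp.linearEquiv 1 ℂ (X × B)).toLinearMap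

/-! The canonical image of a Banach algebra is a left ideal in its bidual exactly when the second
adjoint `R_a**` of every right multiplication `R_a` takes values in the canonical image, since
`m □ a = R_a** m`. On `B_X = X ⊕₁ B` right multiplication by `u = (y, ψ)` is the sum of
`x ↦ xψ` on `X` and `φ ↦ φψ` on `B`. The second adjoint of the first piece takes values in `X`
because `f ↦ ψ·f` is weak*-to-weak continuous and weak*-continuous functionals on `X*` are
evaluations; that of the second piece takes values in `B` by the hypothesis on `B`. -/

section WeakDual

variable {𝕜 E : Type*} [NontriviallyNormedField 𝕜] [SeminormedAddCommGroup E] [NormedSpace 𝕜 E]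

theorem exists_eq_apply_of_continuous_weakDual (L : StrongDual 𝕜 E →ₗ[𝕜] 𝕜)
    (hL : Continuous fun f : WeakDual 𝕜 E => L (WeakDual.toStrongDual f)) :
    ∃ x : E, ∀ f : StrongDual 𝕜 E, L f = f x := by
  let Φ : StrongDual 𝕜 (WeakDual 𝕜 E) := ⟨L ∘ₗ WeakDual.toStrongDual.toLinearMap, hL⟩
  obtain ⟨x, hx⟩ := LinearMap.dualEmbedding_surjective (topDualPairing 𝕜 E) Φ
  exact ⟨x, fun f => (DFunLike.congr_fun hx (WeakDual.toStrongDual.symm f)).symm⟩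

end WeakDual

section BidualMap

variable {E F G : Type*} [NormedAddCommGroup E] [NormedSpace ℂ E] [NormedAddCommGroup F]
  [NormedSpace ℂ F] [NormedAddCommGroup G] [NormedSpace ℂ G]

def bidualMap (T : E →L[ℂ] F) (m : Bidual E) : Bidual F :=
  m.comp ((ContinuousLinearMap.compL ℂ E F ℂ).flip T)

@[simp] lemma bidualMap_apply (T : E →L[ℂ] F) (m : Bidual E) (f : StrongDual ℂ F) :
    bidualMap T m f = m (f.comp T) := rfl

lemma bidualMap_add (S T : E →L[ℂ] F) (m : Bidual E) :
    bidualMap (S + T) m = bidualMap S m + bidualMap T m := by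
  ext f; simp [ContinuousLinearMap.comp_add]

lemma bidualMap_comp (S : F →L[ℂ] G) (T : E →L[ℂ] F) (m : Bidual E) :
    bidualMap (S.comp T) m = bidualMap S (bidualMap T m) := rfl

lemma bidualMap_iota (T : E →L[ℂ] F) (x : E) : bidualMap T (iota E x) = iota F (T x) := rfl

lemma bidualMap_mem_range_iota {T : E →L[ℂ] F} {m : Bidual E} (hm : m ∈ Set.range (iota E)) :
    bidualMap T m ∈ Set.range (iota F) := by
  obtain ⟨x, rfl⟩ := hm
  exact ⟨T x, (bidualMap_iota T x).symm⟩

lemma add_mem_range_iota {m n : Bidual E} (hm : m ∈ Set.range (iota E))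
    (hn : n ∈ Set.range (iota E)) : m + n ∈ Set.range (iota E) := by
  obtain ⟨x, rfl⟩ := hm
  obtain ⟨y, rfl⟩ := hn
  exact ⟨x + y, map_add _ x y⟩

lemma bidualMap_mem_range_iota_of_continuous {T : E →L[ℂ] F} {m : Bidual E}
    (hT : Continuous fun f : WeakDual ℂ F => m ((WeakDual.toStrongDual f).comp T)) :
    bidualMap T m ∈ Set.range (iota F) := by
  obtain ⟨y, hy⟩ := exists_eq_apply_of_continuous_weakDual (bidualMap T m).toLinearMap hT
  exact ⟨y, ContinuousLinearMap.ext fun f => (hy f).symm⟩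

end BidualMap

lemma arens1_iota (mA : A →L[ℂ] A →L[ℂ] A) (m : Bidual A) (a : A) :
    arens1 mA m (iota A a) = bidualMap (mA.flip a) m := rfl

section EllOneSum

variable (X A)

def inlL : X →L[ℂ] WithLp 1 (X × A) :=
  (WithLp.prodContinuousLinearEquiv 1 ℂ X A).symm.toContinuousLinearMap.comp
    (ContinuousLinearMap.inl ℂ X A)

def inrL : A →L[ℂ] WithLp 1 (X × A) :=
  (WithLp.prodContinuousLinearEquiv 1 ℂ X A).symm.toContinuousLinearMap.comp
    (ContinuousLinearMap.inr ℂ X A)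

variable {X A}

lemma flip_eq_inlL_comp_add_inrL_comp (sm : X →L[ℂ] A →L[ℂ] X) (mA : A →L[ℂ] A →L[ℂ] A)
    (mAX : WithLp 1 (X × A) →L[ℂ] WithLp 1 (X × A) →L[ℂ] WithLp 1 (X × A))
    (hmAX : ∀ u v : WithLp 1 (X × A),
      WithLp.equiv 1 (X × A) (mAX u v) =
        (sm (WithLp.equiv 1 (X × A) u).1 (WithLp.equiv 1 (X × A) v).2,
         mA (WithLp.equiv 1 (X × A) u).2 (WithLp.equiv 1 (X × A) v).2))
    (v : WithLp 1 (X × A)) :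
    mAX.flip v = (inlL X A).comp ((sm.flip v.snd).comp (WithLp.fstL 1 ℂ X A)) +
      (inrL X A).comp ((mA.flip v.snd).comp (WithLp.sndL 1 ℂ X A)) := by
  ext u : 1
  apply (WithLp.equiv 1 (X × A)).injective
  rw [ContinuousLinearMap.flip_apply, hmAX]
  simp [inlL, inrL]

end EllOneSum

theorem statement15_general
    {X B : Type*} [NormedAddCommGroup X] [NormedSpace ℂ X]
    [NormedAddCommGroup B] [NormedSpace ℂ B]
    (mB : B →L[ℂ] B →L[ℂ] B)
    (hBlideal : ∀ (b : B) (m : Bidual B), arens1 mB m (iota B b) ∈ Set.range (iota B))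
    (sm : X →L[ℂ] B →L[ℂ] X)
    -- weak*-to-weak continuity of `f ↦ φ·f`:
    (hcont : ∀ (φ : B) (g : Bidual X),
      Continuous fun f : WeakDual ℂ X => g ((WeakDual.toStrongDual f).comp (sm.flip φ)))
    (mBX : WithLp 1 (X × B) →L[ℂ] WithLp 1 (X × B) →L[ℂ] WithLp 1 (X × B))
    (hmBX : ∀ u v : WithLp 1 (X × B),
      WithLp.equiv 1 (X × B) (mBX u v) =
        (sm (WithLp.equiv 1 (X × B) u).1 (WithLp.equiv 1 (X × B) v).2,
         mB (WithLp.equiv 1 (X × B) u).2 (WithLp.equiv 1 (X × B) v).2)) :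
    ∀ (u : WithLp 1 (X × B)) (m : Bidual (WithLp 1 (X × B))),
      arens1 mBX m (iota (WithLp 1 (X × B)) u) ∈ Set.range (iota (WithLp 1 (X × B))) := by
  intro u m
  rw [arens1_iota, flip_eq_inlL_comp_add_inrL_comp sm mB mBX hmBX, bidualMap_add]
  simp only [bidualMap_comp]
  refine add_mem_range_iota (bidualMap_mem_range_iota ?_) (bidualMap_mem_range_iota ?_)
  · exact bidualMap_mem_range_iota_of_continuous (hcont u.snd _)
  · rw [← arens1_iota]
    exact hBlideal u.snd _

/-- Let `B` be a Banach algebra whose canonical image is a left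
ideal in `(B**, □)`, and let `X` be a right Banach `B`-module such that for every
`φ ∈ B` the map `f ↦ φ·f : X* → X*`, `⟨φ·f, x⟩ = ⟨f, xφ⟩` (i.e. `f ↦ f ∘ (sm · φ)`),
is weak*-to-weak continuous (continuity into the weak topology being tested against
every `g ∈ X**`).  Then the canonical image of `B_X` is a left ideal in `(B_X)**`
with its first Arens product. -/
theorem statement15
    {X B : Type*} [NormedAddCommGroup X] [NormedSpace ℂ X] [CompleteSpace X]
    [NormedAddCommGroup B] [NormedSpace ℂ B] [CompleteSpace B]
    (mB : B →L[ℂ] B →L[ℂ] B) (hB : IsBanachAlgebra mB)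
    (hBlideal : ∀ (b : B) (m : Bidual B), arens1 mB m (iota B b) ∈ Set.range (iota B))
    (sm : X →L[ℂ] B →L[ℂ] X)
    (hsm_assoc : ∀ (x : X) (φ ψ : B), sm x (mB φ ψ) = sm (sm x φ) ψ)
    (hsm_norm : ∀ (x : X) (φ : B), ‖sm x φ‖ ≤ ‖x‖ * ‖φ‖)
    -- weak*-to-weak continuity of `f ↦ φ·f`:
    (hcont : ∀ (φ : B) (g : Bidual X),
      Continuous fun f : WeakDual ℂ X => g ((WeakDual.toStrongDual f).comp (sm.flip φ)))
    (mBX : WithLp 1 (X × B) →L[ℂ] WithLp 1 (X × B) →L[ℂ] WithLp 1 (X × B))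
    (hmBX : ∀ u v : WithLp 1 (X × B),
      WithLp.equiv 1 (X × B) (mBX u v) =
        (sm (WithLp.equiv 1 (X × B) u).1 (WithLp.equiv 1 (X × B) v).2,
         mB (WithLp.equiv 1 (X × B) u).2 (WithLp.equiv 1 (X × B) v).2)) :
    ∀ (u : WithLp 1 (X × B)) (m : Bidual (WithLp 1 (X × B))),
      arens1 mBX m (iota (WithLp 1 (X × B)) u) ∈ Set.range (iota (WithLp 1 (X × B))) :=
  statement15_general mB hBlideal sm hcont mBX hmBX

end ArensNote
end
end

section
/- Let B be a Banach algebra with a right identity whose canonical image is a right ideal in (B**,□), and let X = B* be the left Banach B-module with the natural action ⟨φx, ψ⟩ = ⟨x, ψφ⟩ (x∈B*, φ,ψ∈B). Then the canonical image of the Banach algebra _X B = B* ⊕₁ B, with product (x,φ)(y,ψ) = (φy, φψ), is a right ideal in (_X B)** (first Arens product) if and only if B is reflexive. -/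
noncomputable section

open NormedSpace Filter Topology

namespace ArensNote

variable {X A : Type*} [NormedAddCommGroup X] [NormedSpace ℂ X]
  [NormedAddCommGroup A] [NormedSpace ℂ A]

/-
If `B` is reflexive, so are `B*` and the `ℓ¹`-sum `B* ⊕₁ B`, and then every element of its
bidual is in the canonical image. Conversely, since `e` is a right identity of `B`, the element
`u = (0, e)` acts as the identity on the first coordinate: `u (y, ψ) = (y, eψ)`. For `q ∈ B***`
lifted to `m ∈ (_X B)**` through the first coordinate, `ι(u) □ m` agrees with `m` on the
functionals that factor through the first projection, so writing `ι(u) □ m = ι(w)` gives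
`q = ι(w.1)`. Hence `B*` is reflexive, and so is the Banach space `B`.
-/

def _root_.ContinuousLinearMap.dualMap {𝕜 E F : Type*} [RCLike 𝕜]
    [NormedAddCommGroup E] [NormedSpace 𝕜 E] [NormedAddCommGroup F] [NormedSpace 𝕜 F]
    (T : E →L[𝕜] F) : StrongDual 𝕜 F →L[𝕜] StrongDual 𝕜 E :=
  (ContinuousLinearMap.compL 𝕜 E F 𝕜).flip T

@[simp] lemma _root_.ContinuousLinearMap.dualMap_apply {𝕜 E F : Type*} [RCLike 𝕜]
    [NormedAddCommGroup E] [NormedSpace 𝕜 E] [NormedAddCommGroup F] [NormedSpace 𝕜 F]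
    (T : E →L[𝕜] F) (f : StrongDual 𝕜 F) : T.dualMap f = f.comp T := rfl

section reflexive

variable {𝕜 E F : Type*} [RCLike 𝕜]
  [NormedAddCommGroup E] [NormedSpace 𝕜 E] [NormedAddCommGroup F] [NormedSpace 𝕜 F]

lemma _root_.Submodule.exists_strongDual_eq_zero_of_notMem {p : Submodule 𝕜 E}
    [IsClosed (p : Set E)] {x : E} (hx : x ∉ p) :
    ∃ f : StrongDual 𝕜 E, f x ≠ 0 ∧ ∀ y ∈ p, f y = 0 := by
  rw [← Submodule.Quotient.mk_eq_zero] at hx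
  obtain ⟨f, hf⟩ := SeparatingDual.exists_ne_zero (R := 𝕜) hx
  exact ⟨f.comp p.mkQL, hf, fun y hy => by simp [(Submodule.Quotient.mk_eq_zero p).2 hy]⟩

lemma surjective_inclusionInDoubleDual_dual
    (h : Function.Surjective (inclusionInDoubleDual 𝕜 E)) :
    Function.Surjective (inclusionInDoubleDual 𝕜 (StrongDual 𝕜 E)) := by
  intro p
  refine ⟨p.comp (inclusionInDoubleDual 𝕜 E), ?_⟩
  ext m
  obtain ⟨x, rfl⟩ := h m
  rfl

lemma surjective_inclusionInDoubleDual_of_dual [CompleteSpace E]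
    (h : Function.Surjective (inclusionInDoubleDual 𝕜 (StrongDual 𝕜 E))) :
    Function.Surjective (inclusionInDoubleDual 𝕜 E) := by
  set S := LinearMap.range (inclusionInDoubleDual 𝕜 E).toLinearMap
  have : IsClosed (S : Set (StrongDual 𝕜 (StrongDual 𝕜 E))) := by
    have hiso : Isometry (inclusionInDoubleDual 𝕜 E) := (inclusionInDoubleDualLi 𝕜).isometry
    rw [LinearMap.coe_range]
    exact hiso.isClosedEmbedding.isClosed_range
  intro m
  by_contra hm
  obtain ⟨Φ, hΦm, hΦS⟩ :=
    S.exists_strongDual_eq_zero_of_notMem (𝕜 := 𝕜) (x := m) (by simpa [S] using hm)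
  obtain ⟨f, rfl⟩ := h Φ
  have hf : f = 0 := by
    ext x
    exact hΦS _ ⟨x, rfl⟩
  simp [hf] at hΦm

lemma surjective_inclusionInDoubleDual_of_continuousLinearEquiv (e : E ≃L[𝕜] F)
    (h : Function.Surjective (inclusionInDoubleDual 𝕜 E)) :
    Function.Surjective (inclusionInDoubleDual 𝕜 F) := by
  intro M
  obtain ⟨x, hx⟩ := h (M.comp (e.symm : F →L[𝕜] E).dualMap)
  refine ⟨e x, ?_⟩
  ext f
  calc inclusionInDoubleDual 𝕜 F (e x) f
      = inclusionInDoubleDual 𝕜 E x (f.comp (e : E →L[𝕜] F)) := rfl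
    _ = M ((f.comp (e : E →L[𝕜] F)).comp e.symm) := by rw [hx]; rfl
    _ = M f := by
      rw [ContinuousLinearMap.comp_assoc, ContinuousLinearEquiv.coe_comp_coe_symm,
        ContinuousLinearMap.comp_id]

lemma surjective_inclusionInDoubleDual_prod
    (hE : Function.Surjective (inclusionInDoubleDual 𝕜 E))
    (hF : Function.Surjective (inclusionInDoubleDual 𝕜 F)) :
    Function.Surjective (inclusionInDoubleDual 𝕜 (E × F)) := by
  intro M
  obtain ⟨x, hx⟩ := hE (M.comp (ContinuousLinearMap.fst 𝕜 E F).dualMap)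
  obtain ⟨y, hy⟩ := hF (M.comp (ContinuousLinearMap.snd 𝕜 E F).dualMap)
  refine ⟨(x, y), ?_⟩
  ext f
  calc inclusionInDoubleDual 𝕜 (E × F) (x, y) f
      = inclusionInDoubleDual 𝕜 E x (f.comp (.inl 𝕜 E F))
        + inclusionInDoubleDual 𝕜 F y (f.comp (.inr 𝕜 E F)) :=
          (f.comp_inl_add_comp_inr (x, y)).symm
    _ = M ((f.comp (.inl 𝕜 E F)).comp (.fst 𝕜 E F))
        + M ((f.comp (.inr 𝕜 E F)).comp (.snd 𝕜 E F)) := by rw [hx, hy]; rfl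
    _ = M f := by
      rw [← map_add]
      exact congrArg M (ContinuousLinearMap.ext f.comp_inl_add_comp_inr)

lemma surjective_inclusionInDoubleDual_withLp_prod (p : ENNReal) [Fact (1 ≤ p)]
    (hE : Function.Surjective (inclusionInDoubleDual 𝕜 E))
    (hF : Function.Surjective (inclusionInDoubleDual 𝕜 F)) :
    Function.Surjective (inclusionInDoubleDual 𝕜 (WithLp p (E × F))) :=
  surjective_inclusionInDoubleDual_of_continuousLinearEquiv
    (WithLp.prodContinuousLinearEquiv p 𝕜 E F).symm (surjective_inclusionInDoubleDual_prod hE hF)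

end reflexive

lemma arens1_iota_apply (mA : A →L[ℂ] A →L[ℂ] A) (a : A) (m : Bidual A)
    (f : StrongDual ℂ A) :
    arens1 mA (iota A a) m f = m (f.comp (mA a)) :=
  rfl

lemma surjective_iota_of_arens1_iota_mem_range {G Y : Type*}
    [NormedAddCommGroup G] [NormedSpace ℂ G] [NormedAddCommGroup Y] [NormedSpace ℂ Y]
    (mG : G →L[ℂ] G →L[ℂ] G) (P : G →L[ℂ] Y) (J : Y →L[ℂ] G)
    (hPJ : ∀ y, P (J y) = y)
    {u : G} (hu : ∀ v, P (mG u v) = P v)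
    (h : ∀ m : Bidual G, arens1 mG (iota G u) m ∈ Set.range (iota G)) :
    Function.Surjective (iota Y) := by
  intro q
  obtain ⟨w, hw⟩ := h (q.comp J.dualMap)
  refine ⟨P w, ?_⟩
  ext g
  have hg : ((g.comp P).comp (mG u)).comp J = g := by
    ext y
    simp [hu, hPJ]
  calc iota Y (P w) g = iota G w (g.comp P) := rfl
    _ = arens1 mG (iota G u) (q.comp J.dualMap) (g.comp P) := by rw [hw]
    _ = q g := by rw [arens1_iota_apply, ContinuousLinearMap.comp_apply,
        ContinuousLinearMap.dualMap_apply, hg]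

theorem statement17_general
    {B : Type*} [NormedAddCommGroup B] [NormedSpace ℂ B] [CompleteSpace B]
    (mB : B →L[ℂ] B →L[ℂ] B)
    (er : B) (her : ∀ a : B, mB a er = a)
    -- the natural left action of `B` on `X = B*`:
    (sm : B →L[ℂ] StrongDual ℂ B →L[ℂ] StrongDual ℂ B)
    (hsm : ∀ (φ : B) (x : StrongDual ℂ B) (ψ : B), sm φ x ψ = x (mB ψ φ))
    -- the multiplication of `_X B` : `(x, φ)(y, ψ) = (φ y, φψ)`:
    (mXB : WithLp 1 (StrongDual ℂ B × B) →L[ℂ] WithLp 1 (StrongDual ℂ B × B) →L[ℂ]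
      WithLp 1 (StrongDual ℂ B × B))
    (hmXB : ∀ u v : WithLp 1 (StrongDual ℂ B × B),
      WithLp.equiv 1 (StrongDual ℂ B × B) (mXB u v) =
        (sm (WithLp.equiv 1 (StrongDual ℂ B × B) u).2 (WithLp.equiv 1 (StrongDual ℂ B × B) v).1,
         mB (WithLp.equiv 1 (StrongDual ℂ B × B) u).2 (WithLp.equiv 1 (StrongDual ℂ B × B) v).2)) :
    (∀ (u : WithLp 1 (StrongDual ℂ B × B)) (m : Bidual (WithLp 1 (StrongDual ℂ B × B))),
      arens1 mXB (iota (WithLp 1 (StrongDual ℂ B × B)) u) m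
        ∈ Set.range (iota (WithLp 1 (StrongDual ℂ B × B))))
      ↔ Function.Surjective (iota B) := by
  constructor
  · intro H
    have hsm_er : ∀ x, sm er x = x := fun x => by
      ext ψ
      rw [hsm, her]
    have hu : ∀ v, (mXB (WithLp.toLp 1 (0, er)) v).fst = v.fst := fun v => by
      simpa [hsm_er] using congrArg Prod.fst (hmXB (WithLp.toLp 1 (0, er)) v)
    exact surjective_inclusionInDoubleDual_of_dual (𝕜 := ℂ)
      (surjective_iota_of_arens1_iota_mem_range mXB (WithLp.fstL 1 ℂ (StrongDual ℂ B) B)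
        ((WithLp.prodContinuousLinearEquiv 1 ℂ (StrongDual ℂ B) B).symm.toContinuousLinearMap
          ∘L ContinuousLinearMap.inl ℂ (StrongDual ℂ B) B) (fun _ => rfl) hu (H _))
  · intro h u m
    exact surjective_inclusionInDoubleDual_withLp_prod (𝕜 := ℂ) 1
      (surjective_inclusionInDoubleDual_dual h) h _

/-- Let `B` be a Banach algebra with a right identity whose
canonical image is a right ideal in `(B**, □)`, and let `X = B*` be the left Banach
`B`-module with the natural action `⟨φx, ψ⟩ = ⟨x, ψφ⟩`.  Then the canonical image of
`_X B = B* ⊕₁ B`, with product `(x, φ)(y, ψ) = (φy, φψ)`, is a right ideal in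
`(_X B)**` (first Arens product) if and only if `B` is reflexive. -/
theorem statement17
    {B : Type*} [NormedAddCommGroup B] [NormedSpace ℂ B] [CompleteSpace B]
    (mB : B →L[ℂ] B →L[ℂ] B) (hB : IsBanachAlgebra mB)
    (er : B) (her : ∀ a : B, mB a er = a)
    (hBrideal : ∀ (b : B) (m : Bidual B), arens1 mB (iota B b) m ∈ Set.range (iota B))
    -- the natural left action of `B` on `X = B*`:
    (sm : B →L[ℂ] StrongDual ℂ B →L[ℂ] StrongDual ℂ B)
    (hsm : ∀ (φ : B) (x : StrongDual ℂ B) (ψ : B), sm φ x ψ = x (mB ψ φ))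
    -- the multiplication of `_X B` : `(x, φ)(y, ψ) = (φ y, φψ)`:
    (mXB : WithLp 1 (StrongDual ℂ B × B) →L[ℂ] WithLp 1 (StrongDual ℂ B × B) →L[ℂ]
      WithLp 1 (StrongDual ℂ B × B))
    (hmXB : ∀ u v : WithLp 1 (StrongDual ℂ B × B),
      WithLp.equiv 1 (StrongDual ℂ B × B) (mXB u v) =
        (sm (WithLp.equiv 1 (StrongDual ℂ B × B) u).2 (WithLp.equiv 1 (StrongDual ℂ B × B) v).1,
         mB (WithLp.equiv 1 (StrongDual ℂ B × B) u).2 (WithLp.equiv 1 (StrongDual ℂ B × B) v).2)) :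
    (∀ (u : WithLp 1 (StrongDual ℂ B × B)) (m : Bidual (WithLp 1 (StrongDual ℂ B × B))),
      arens1 mXB (iota (WithLp 1 (StrongDual ℂ B × B)) u) m
        ∈ Set.range (iota (WithLp 1 (StrongDual ℂ B × B))))
      ↔ Function.Surjective (iota B) :=
  statement17_general mB er her sm hsm mXB hmXB

end ArensNote
end
end
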